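/- arXiv:1908.07880 — 5 statements merged into one kernel-verified Lean document; each statement's English description precedes it below -/
import Mathlib

section
/- Every finite, nonempty, facet-connected configuration of unit squares in the integer grid ℤ² contains a corner module (a cell whose North and East neighbors are both empty, or South and East, or North and West, or South and West) whose removal leaves the remaining configuration facet-connected (or empty). -/
/-- Two grid cells are facet-adjacent if they are at L¹-distance 1. -/
def adjCell (p q : ℤ × ℤ) : Prop :=
  (p.1 - q.1).natAbs + (p.2 - q.2).natAbs = 1

/-- A set of cells is facet-connected if any two of its cells are joined
by a path of facet-adjacent cells inside the set. -/
def connectedIn (C : Set (ℤ × ℤ)) : Prop :=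
  ∀ p ∈ C, ∀ q ∈ C,
    Relation.ReflTransGen (fun a b => a ∈ C ∧ b ∈ C ∧ adjCell a b) p q

/-- A corner: two consecutive cardinal neighbors are empty. -/
def isCorner (C : Set (ℤ × ℤ)) (c : ℤ × ℤ) : Prop :=
  (c + (0, 1) ∉ C ∧ c + (1, 0) ∉ C) ∨ (c + (0, -1) ∉ C ∧ c + (1, 0) ∉ C) ∨
  (c + (0, 1) ∉ C ∧ c + (-1, 0) ∉ C) ∨ (c + (0, -1) ∉ C ∧ c + (-1, 0) ∉ C)

/-- The potential Φ(x,y) = (x+y, x). -/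
def Phi (c : ℤ × ℤ) : ℤ × ℤ := (c.1 + c.2, c.1)

/-- Lexicographic order on ℤ × ℤ. -/
def lexLe (a b : ℤ × ℤ) : Prop := a.1 < b.1 ∨ (a.1 = b.1 ∧ a.2 ≤ b.2)

/-!
The lexicographically largest and smallest cells are two distinct corners. If the chosen corner
`d` is a cut cell, some piece `K` of `C \ {d}` misses a prescribed cell, and `K ∪ {d}` is a
smaller connected configuration; by induction it has a non-cut corner other than `d`. That corner
lies in `K`, all its neighbours lie in `K ∪ {d}`, and it stays non-cut in `C` because the rest of
`C` hangs on `d`.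
-/

open Relation

def linkIn (S : Set (ℤ × ℤ)) (a b : ℤ × ℤ) : Prop := a ∈ S ∧ b ∈ S ∧ adjCell a b

def compIn (S : Set (ℤ × ℤ)) (n : ℤ × ℤ) : Set (ℤ × ℤ) :=
  {z | z ∈ S ∧ ReflTransGen (linkIn S) n z}

section Adjacency

variable {a b : ℤ × ℤ}

theorem adjCell_comm : adjCell a b ↔ adjCell b a := by
  unfold adjCell; omega

theorem adjCell.ne (h : adjCell a b) : a ≠ b := by
  rintro rfl; simp [adjCell] at h

theorem adjCell_add_self (c d : ℤ × ℤ) (hd : d.1.natAbs + d.2.natAbs = 1) :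
    adjCell (c + d) c := by
  simpa [adjCell] using hd

theorem isCorner.of_adj_mem {C D : Set (ℤ × ℤ)} {c : ℤ × ℤ}
    (hnbr : ∀ v ∈ C, adjCell v c → v ∈ D) (h : isCorner D c) : isCorner C c := by
  have out : ∀ d : ℤ × ℤ, d.1.natAbs + d.2.natAbs = 1 → c + d ∉ D → c + d ∉ C :=
    fun d hd hD hC => hD (hnbr _ hC (adjCell_add_self c d hd))
  rcases h with ⟨h1, h2⟩ | ⟨h1, h2⟩ | ⟨h1, h2⟩ | ⟨h1, h2⟩
  · exact Or.inl ⟨out _ rfl h1, out _ rfl h2⟩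
  · exact Or.inr <| Or.inl ⟨out _ rfl h1, out _ rfl h2⟩
  · exact Or.inr <| Or.inr <| Or.inl ⟨out _ rfl h1, out _ rfl h2⟩
  · exact Or.inr <| Or.inr <| Or.inr ⟨out _ rfl h1, out _ rfl h2⟩

end Adjacency

section Extremes

variable {C : Set (ℤ × ℤ)} {c : ℤ × ℤ}

theorem isCorner_of_forall_toLex_le (h : ∀ z ∈ C, toLex z ≤ toLex c) : isCorner C c := by
  refine Or.inl ⟨fun hN => ?_, fun hE => ?_⟩
  · have := Prod.Lex.le_iff.mp (h _ hN); simp at this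
  · have := Prod.Lex.le_iff.mp (h _ hE); simp at this

theorem isCorner_of_forall_le_toLex (h : ∀ z ∈ C, toLex c ≤ toLex z) : isCorner C c := by
  refine Or.inr <| Or.inr <| Or.inr ⟨fun hS => ?_, fun hW => ?_⟩
  · have := Prod.Lex.le_iff.mp (h _ hS); simp at this
  · have := Prod.Lex.le_iff.mp (h _ hW); simp at this

/-- The lexicographic maximum and minimum are two distinct corners, so one of them avoids `x`. -/
theorem exists_isCorner_ne (hfin : C.Finite) (hnt : C.Nontrivial) (x : ℤ × ℤ) :
    ∃ d ∈ C, d ≠ x ∧ isCorner C d := by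
  have hne : hfin.toFinset.Nonempty := hfin.toFinset_nonempty.mpr hnt.nonempty
  obtain ⟨M, hM, hmax⟩ := hfin.toFinset.exists_max_image toLex hne
  obtain ⟨m, hm, hmin⟩ := hfin.toFinset.exists_min_image toLex hne
  simp only [Set.Finite.mem_toFinset] at hM hm hmax hmin
  by_cases hMx : M = x
  · refine ⟨m, hm, fun hmx => ?_, isCorner_of_forall_le_toLex hmin⟩
    obtain ⟨y, hy, z, hz, hyz⟩ := hnt
    have hsq : ∀ w ∈ C, w = M := fun w hw =>
      toLex.injective <| le_antisymm (hmax w hw) (hMx ▸ hmx ▸ hmin w hw)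
    exact hyz ((hsq y hy).trans (hsq z hz).symm)
  · exact ⟨M, hM, hMx, isCorner_of_forall_toLex_le hmax⟩

end Extremes

section Reachability

variable {S T : Set (ℤ × ℤ)} {a b c n p z : ℤ × ℤ}

instance (S : Set (ℤ × ℤ)) : Std.Symm (linkIn S) :=
  ⟨fun _ _ h => ⟨h.2.1, h.1, adjCell_comm.mp h.2.2⟩⟩

theorem reflTransGen_linkIn_mono (hST : S ⊆ T) (h : ReflTransGen (linkIn S) a b) :
    ReflTransGen (linkIn T) a b :=
  ReflTransGen.mono (fun _ _ hl => ⟨hST hl.1, hST hl.2.1, hl.2.2⟩) _ _ h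

theorem reflTransGen_linkIn_restrict (h : ReflTransGen (linkIn S) a b)
    (hT : ∀ w ∈ S, ReflTransGen (linkIn S) a w → w ∈ T) :
    ReflTransGen (linkIn T) a b := by
  induction h with
  | refl => exact .refl
  | tail hab hstep ih =>
    exact ih.tail ⟨hT _ hstep.1 hab, hT _ hstep.2.1 (hab.tail hstep), hstep.2.2⟩

theorem connectedIn_of_forall_reach (h : ∀ p ∈ S, ReflTransGen (linkIn S) p c) :
    connectedIn S :=
  fun p hp q hq => (h p hp).trans (symm (h q hq))

/-- Cut a path ending at `c` just before its first visit to `c`. -/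
theorem exists_adj_reach_diff (h : ReflTransGen (linkIn S) p c) (hpc : p ≠ c) :
    ∃ n ∈ S, adjCell n c ∧ ReflTransGen (linkIn (S \ {c})) p n := by
  induction h using ReflTransGen.head_induction_on with
  | refl => exact absurd rfl hpc
  | @head p q hpq _ ih =>
    by_cases hqc : q = c
    · subst hqc
      exact ⟨p, hpq.1, hpq.2.2, .refl⟩
    · obtain ⟨n, hnS, hnc, hqn⟩ := ih hqc
      exact ⟨n, hnS, hnc, hqn.head ⟨⟨hpq.1, hpc⟩, ⟨hpq.2.1, hqc⟩, hpq.2.2⟩⟩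

theorem exists_adj_not_reach_of_not_connectedIn {C : Set (ℤ × ℤ)} (hconn : connectedIn C)
    (hc : c ∈ C) (hcut : ¬ connectedIn (C \ {c})) :
    ∃ n₁ n₂, adjCell n₁ c ∧ adjCell n₂ c ∧ n₁ ∈ C ∧ n₂ ∈ C ∧
      ¬ ReflTransGen (linkIn (C \ {c})) n₁ n₂ := by
  unfold connectedIn at hcut
  push Not at hcut
  obtain ⟨p, hp, q, hq, hpq⟩ := hcut
  obtain ⟨n₁, hn₁, hn₁c, hpn₁⟩ := exists_adj_reach_diff (hconn p hp.1 c hc) hp.2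
  obtain ⟨n₂, hn₂, hn₂c, hqn₂⟩ := exists_adj_reach_diff (hconn q hq.1 c hc) hq.2
  exact ⟨n₁, n₂, hn₁c, hn₂c, hn₁, hn₂, fun h => hpq (hpn₁.trans (h.trans (symm hqn₂)))⟩

end Reachability

section Components

variable {S : Set (ℤ × ℤ)} {n z : ℤ × ℤ}

theorem compIn_subset : compIn S n ⊆ S := fun _ hz => hz.1

theorem mem_compIn_self (hn : n ∈ S) : n ∈ compIn S n := ⟨hn, .refl⟩

theorem mem_compIn_of_adj {w : ℤ × ℤ} (hz : z ∈ compIn S n) (hw : w ∈ S) (h : adjCell z w) :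
    w ∈ compIn S n :=
  ⟨hw, hz.2.tail ⟨hz.1, hw, h⟩⟩

theorem reflTransGen_linkIn_compIn (hz : z ∈ compIn S n) :
    ReflTransGen (linkIn (compIn S n)) n z :=
  reflTransGen_linkIn_restrict hz.2 fun _ hw hnw => ⟨hw, hnw⟩

theorem notMem_compIn_of_not_reach {m : ℤ × ℤ} (h : ¬ ReflTransGen (linkIn S) n m)
    (hz : z ∈ compIn S n) : z ∉ compIn S m :=
  fun hz' => h (hz.2.trans (symm hz'.2))

end Components

section Pieces

variable {C : Set (ℤ × ℤ)} {c c' n : ℤ × ℤ}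

theorem insert_compIn_subset (hc : c ∈ C) : insert c (compIn (C \ {c}) n) ⊆ C :=
  Set.insert_subset hc (compIn_subset.trans Set.sdiff_subset)

theorem connectedIn_insert_compIn (hn : n ∈ C) (hnc : adjCell n c) :
    connectedIn (insert c (compIn (C \ {c}) n)) := by
  refine connectedIn_of_forall_reach (c := c) fun p hp => ?_
  rcases hp with rfl | hpK
  · exact .refl
  · have hpn := reflTransGen_linkIn_mono (Set.subset_insert c _)
      (symm (reflTransGen_linkIn_compIn hpK))
    exact hpn.tail ⟨Or.inr (mem_compIn_self ⟨hn, hnc.ne⟩), Set.mem_insert _ _, hnc⟩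

theorem isCorner_of_isCorner_insert_compIn (hc' : c' ∈ compIn (C \ {c}) n)
    (h : isCorner (insert c (compIn (C \ {c}) n)) c') : isCorner C c' := by
  refine h.of_adj_mem fun v hv hvc' => ?_
  by_cases hvc : v = c
  · exact hvc ▸ Set.mem_insert _ _
  · exact Or.inr (mem_compIn_of_adj hc' ⟨hv, hvc⟩ (adjCell_comm.mp hvc'))

/-- Cells of `C \ {c}` outside the piece of `n` reach `c` without entering that piece, so removing
`c'` from the piece cuts none of them off. -/
theorem connectedIn_diff_of_connectedIn_insert_compIn (hconn : connectedIn C) (hc : c ∈ C)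
    (hc' : c' ∈ compIn (C \ {c}) n)
    (h : connectedIn (insert c (compIn (C \ {c}) n) \ {c'})) : connectedIn (C \ {c'}) := by
  have hcC : c ∈ C \ {c'} := ⟨hc, Ne.symm hc'.1.2⟩
  refine connectedIn_of_forall_reach (c := c) fun p hp => ?_
  by_cases hpc : p = c
  · exact hpc ▸ .refl
  by_cases hpK : p ∈ compIn (C \ {c}) n
  · exact reflTransGen_linkIn_mono (Set.sdiff_subset_sdiff_left (insert_compIn_subset hc))
      (h p ⟨Or.inr hpK, hp.2⟩ c ⟨Set.mem_insert _ _, hcC.2⟩)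
  obtain ⟨m, hmC, hmc, hpm⟩ := exists_adj_reach_diff (hconn p hp.1 c hc) hpc
  have avoid : ∀ w ∈ C \ {c}, ReflTransGen (linkIn (C \ {c})) p w → w ∈ C \ {c'} :=
    fun w hw hpw => ⟨hw.1, fun hwc' => hpK ⟨⟨hp.1, hpc⟩, hc'.2.trans (hwc' ▸ symm hpw)⟩⟩
  exact (reflTransGen_linkIn_restrict hpm avoid).tail ⟨avoid m ⟨hmC, hmc.ne⟩ hpm, hcC, hmc⟩

theorem exists_compIn_not_mem (hconn : connectedIn C) (hc : c ∈ C)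
    (hcut : ¬ connectedIn (C \ {c})) (x : ℤ × ℤ) :
    ∃ n ∈ C, adjCell n c ∧ x ∉ compIn (C \ {c}) n ∧ insert c (compIn (C \ {c}) n) ⊂ C := by
  obtain ⟨n₁, n₂, hn₁c, hn₂c, hn₁, hn₂, hsep⟩ :=
    exists_adj_not_reach_of_not_connectedIn hconn hc hcut
  have hssub : ∀ m m', m' ∈ C → adjCell m' c → ¬ ReflTransGen (linkIn (C \ {c})) m m' →
      insert c (compIn (C \ {c}) m) ⊂ C := fun m m' hm' hm'c hmm' =>
    (Set.ssubset_iff_of_subset (insert_compIn_subset hc)).mpr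
      ⟨m', hm', fun hmem => hmem.elim hm'c.ne fun hm'K => hmm' hm'K.2⟩
  by_cases hx : x ∈ compIn (C \ {c}) n₁
  · refine ⟨n₂, hn₂, hn₂c, notMem_compIn_of_not_reach hsep hx, hssub n₂ n₁ hn₁ hn₁c ?_⟩
    exact fun h => hsep (symm h)
  · exact ⟨n₁, hn₁, hn₁c, hx, hssub n₁ n₂ hn₂ hn₂c hsep⟩

end Pieces

/-- Strengthened for the induction: the corner can be chosen away from any prescribed cell. -/
theorem exists_noncut_corner_ne (C : Set (ℤ × ℤ)) (hfin : C.Finite) (hnt : C.Nontrivial)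
    (hconn : connectedIn C) (x : ℤ × ℤ) :
    ∃ c ∈ C, c ≠ x ∧ isCorner C c ∧ connectedIn (C \ {c}) := by
  induction hk : C.ncard using Nat.strong_induction_on generalizing C x with
  | _ k ih =>
  obtain ⟨d, hd, hdx, hdcor⟩ := exists_isCorner_ne hfin hnt x
  by_cases hcut : connectedIn (C \ {d})
  · exact ⟨d, hd, hdx, hdcor, hcut⟩
  obtain ⟨n, hn, hnd, hxK, hlt⟩ := exists_compIn_not_mem hconn hd hcut x
  have hnt' : (insert d (compIn (C \ {d}) n)).Nontrivial :=
    ⟨d, Set.mem_insert _ _, n, Or.inr (mem_compIn_self ⟨hn, hnd.ne⟩), hnd.ne.symm⟩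
  obtain ⟨c, hc, hcd, hccor, hcconn⟩ :=
    ih _ (hk ▸ Set.ncard_lt_ncard hlt hfin) _ (hfin.subset hlt.subset) hnt'
      (connectedIn_insert_compIn hn hnd) d rfl
  have hcK : c ∈ compIn (C \ {d}) n := hc.resolve_left hcd
  exact ⟨c, hlt.subset hc, fun hcx => hxK (hcx ▸ hcK),
    isCorner_of_isCorner_insert_compIn hcK hccor,
    connectedIn_diff_of_connectedIn_insert_compIn hconn hd hcK hcconn⟩

/-- every finite nonempty facet-connected configuration has a
corner whose removal leaves the configuration facet-connected (or empty). -/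
theorem exists_noncut_corner (C : Set (ℤ × ℤ)) (hfin : C.Finite)
    (hne : C.Nonempty) (hconn : connectedIn C) :
    ∃ c ∈ C, isCorner C c ∧ (C \ {c} = ∅ ∨ connectedIn (C \ {c})) := by
  obtain ⟨x, hx⟩ := hne
  rcases C.subsingleton_or_nontrivial with hsub | hnt
  · exact ⟨x, hx, isCorner_of_forall_toLex_le fun z hz => (congrArg toLex (hsub hz hx)).le,
      Or.inl (Set.sdiff_eq_empty.mpr fun z hz => hsub hz hx)⟩
  · obtain ⟨c, hc, -, hcor, hcconn⟩ := exists_noncut_corner_ne C hfin hnt hconn x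
    exact ⟨c, hc, hcor, Or.inr hcconn⟩
end

section
/- Let C ⊆ ℤ² be a finite facet-connected configuration with at least 3 cells, and let m be the unique cell of C maximizing the lexicographic potential Φ(x,y) = (x+y, x). If m is a cut vertex of C, then m has exactly two facet-neighbors in C, namely m+(-1,0) and m+(0,-1), and the cell m+(-1,-1) is not in C. -/
lemma adjCell_symm {a b : ℤ × ℤ} (h : adjCell a b) : adjCell b a := by
  unfold adjCell at *; omega

lemma splice (C : Set (ℤ × ℤ)) (m : ℤ × ℤ)
    (hconn : connectedIn C)
    (H : ∀ x ∈ C, ∀ y ∈ C, x ≠ m → y ≠ m → adjCell x m → adjCell y m →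
      Relation.ReflTransGen (fun a b => a ∈ C \ {m} ∧ b ∈ C \ {m} ∧ adjCell a b) x y) :
    connectedIn (C \ {m}) := by
  intro p hp q hq
  obtain ⟨hpC, hpm⟩ := hp
  obtain ⟨hqC, hqm⟩ := hq
  have hpm' : p ≠ m := by simpa using hpm
  have hqm' : q ≠ m := by simpa using hqm
  have key : ∀ r, Relation.ReflTransGen (fun a b => a ∈ C ∧ b ∈ C ∧ adjCell a b) p r →
      (r = m ∧ ∃ x, x ∈ C ∧ x ≠ m ∧ adjCell x m ∧
        Relation.ReflTransGen (fun a b => a ∈ C \ {m} ∧ b ∈ C \ {m} ∧ adjCell a b) p x) ∨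
      (r ≠ m ∧ Relation.ReflTransGen (fun a b => a ∈ C \ {m} ∧ b ∈ C \ {m} ∧ adjCell a b) p r) := by
    intro r hr
    induction hr with
    | refl => exact Or.inr ⟨hpm', Relation.ReflTransGen.refl⟩
    | @tail b c hpb hbc ih =>
      obtain ⟨hbC, hcC, hadj⟩ := hbc
      by_cases hcm : c = m
      · -- c = m, so b ≠ m
        have hbm : b ≠ m := by
          rintro rfl
          rw [hcm] at hadj
          unfold adjCell at hadj; omega
        rcases ih with ⟨hbm', _⟩ | ⟨_, path⟩
        · exact absurd hbm' hbm
        · exact Or.inl ⟨hcm, b, hbC, hbm, hcm ▸ hadj, path⟩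
      · rcases ih with ⟨hbm, x, hxC, hxm, hxadj, pathx⟩ | ⟨hbm, path⟩
        · have hadj' : adjCell c m := adjCell_symm (hbm ▸ hadj)
          exact Or.inr ⟨hcm, pathx.trans (H x hxC c hcC hxm hcm hxadj hadj')⟩
        · exact Or.inr ⟨hcm, path.tail ⟨⟨hbC, by simpa using hbm⟩, ⟨hcC, by simpa using hcm⟩, hadj⟩⟩
  rcases key q (hconn p hpC q hqC) with ⟨hqm2, _⟩ | ⟨_, path⟩
  · exact absurd hqm2 hqm'
  · exact path

/-- if the maximum-potential cell of a facet-connected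
configuration with at least 3 cells is a cut vertex, then it has exactly the
two facet-neighbors m+(-1,0) and m+(0,-1), and m+(-1,-1) is empty. -/
theorem maxPotential_cutVertex (C : Set (ℤ × ℤ)) (hfin : C.Finite)
    (hconn : connectedIn C) (hcard : 3 ≤ C.ncard) (m : ℤ × ℤ) (hm : m ∈ C)
    (hmax : ∀ c ∈ C, lexLe (Phi c) (Phi m))
    (hcut : ¬ connectedIn (C \ {m})) :
    m + (-1, 0) ∈ C ∧ m + (0, -1) ∈ C ∧ m + (-1, -1) ∉ C ∧
      (∀ q ∈ C, adjCell m q → q = m + (-1, 0) ∨ q = m + (0, -1)) := by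
  set a := m + (-1, 0) with hadef
  set b := m + (0, -1) with hbdef
  set d := m + (-1, -1) with hddef
  have h10 : m + (1, 0) ∉ C := by
    intro h
    have := hmax _ h
    simp only [lexLe, Phi, Prod.fst_add, Prod.snd_add] at this
    omega
  have h01 : m + (0, 1) ∉ C := by
    intro h
    have := hmax _ h
    simp only [lexLe, Phi, Prod.fst_add, Prod.snd_add] at this
    omega
  have hclass : ∀ q ∈ C, adjCell m q → q = a ∨ q = b := by
    intro q hq hadj
    have hcases : q = m + (1, 0) ∨ q = a ∨ q = m + (0, 1) ∨ q = b := by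
      unfold adjCell at hadj
      simp only [hadef, hbdef, Prod.ext_iff, Prod.fst_add, Prod.snd_add]
      omega
    rcases hcases with h | h | h | h
    · exact absurd (h ▸ hq) h10
    · exact Or.inl h
    · exact absurd (h ▸ hq) h01
    · exact Or.inr h
  have ham : a ≠ m := by simp [hadef, Prod.ext_iff]
  have hbm : b ≠ m := by simp [hbdef, Prod.ext_iff]
  have hdm : d ≠ m := by simp [hddef, Prod.ext_iff]
  have ha : a ∈ C := by
    by_contra ha
    apply hcut
    apply splice C m hconn
    intro x hx y hy hxm hym hxadj hyadj
    have hxb : x = b := by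
      rcases hclass x hx (adjCell_symm hxadj) with h | h
      · exact absurd (h ▸ hx) ha
      · exact h
    have hyb : y = b := by
      rcases hclass y hy (adjCell_symm hyadj) with h | h
      · exact absurd (h ▸ hy) ha
      · exact h
    rw [hxb, hyb]
  have hb : b ∈ C := by
    by_contra hb
    apply hcut
    apply splice C m hconn
    intro x hx y hy hxm hym hxadj hyadj
    have hxb : x = a := by
      rcases hclass x hx (adjCell_symm hxadj) with h | h
      · exact h
      · exact absurd (h ▸ hx) hb
    have hyb : y = a := by
      rcases hclass y hy (adjCell_symm hyadj) with h | h
      · exact h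
      · exact absurd (h ▸ hy) hb
    rw [hxb, hyb]
  have hd : d ∉ C := by
    intro hd
    apply hcut
    apply splice C m hconn
    have hadjad : adjCell a d := by
      unfold adjCell
      simp only [hadef, hddef, Prod.fst_add, Prod.snd_add]
      omega
    have hadjdb : adjCell d b := by
      unfold adjCell
      simp only [hbdef, hddef, Prod.fst_add, Prod.snd_add]
      omega
    have maC : a ∈ C \ {m} := ⟨ha, by simpa using ham⟩
    have mbC : b ∈ C \ {m} := ⟨hb, by simpa using hbm⟩
    have mdC : d ∈ C \ {m} := ⟨hd, by simpa using hdm⟩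
    have pab : Relation.ReflTransGen
        (fun u v => u ∈ C \ {m} ∧ v ∈ C \ {m} ∧ adjCell u v) a b :=
      (Relation.ReflTransGen.single ⟨maC, mdC, hadjad⟩).tail ⟨mdC, mbC, hadjdb⟩
    have pba : Relation.ReflTransGen
        (fun u v => u ∈ C \ {m} ∧ v ∈ C \ {m} ∧ adjCell u v) b a :=
      (Relation.ReflTransGen.single ⟨mbC, mdC, adjCell_symm hadjdb⟩).tail
        ⟨mdC, maC, adjCell_symm hadjad⟩
    intro x hx y hy hxm hym hxadj hyadj
    rcases hclass x hx (adjCell_symm hxadj) with hxa | hxb <;>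
      rcases hclass y hy (adjCell_symm hyadj) with hya | hyb
    · rw [hxa, hya]
    · rw [hxa, hyb]; exact pab
    · rw [hxb, hya]; exact pba
    · rw [hxb, hyb]
  exact ⟨ha, hb, hd, hclass⟩
end

section
/- Reconfiguring a vertical 1×n strip of modules into a horizontal n×1 strip sharing the same bottom-left cell requires at least Ω(n²) single-module moves, where each move relocates one module to a cell at L¹-distance at most 2 from its current cell. -/
/-- A single-module move: one module relocates to an unoccupied cell at
L¹-distance at most 2 (covering 90° pivots, 180° pivots and slides). -/
def isMove (C D : Finset (ℤ × ℤ)) : Prop :=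
  ∃ p ∈ C, ∃ q : ℤ × ℤ, q ∉ C.erase p ∧
    (p.1 - q.1).natAbs + (p.2 - q.2).natAbs ≤ 2 ∧
    D = insert q (C.erase p)

lemma move_sum_diff {C D : Finset (ℤ × ℤ)} (h : isMove C D) :
    |(∑ c ∈ D, c.2) - (∑ c ∈ C, c.2)| ≤ 2 := by
  obtain ⟨p, hp, q, hq, hd, rfl⟩ := h
  rw [Finset.sum_insert hq, ← Finset.add_sum_erase _ _ hp]
  have habs : |q.2 - p.2| ≤ 2 := by
    have h2 : (p.2 - q.2).natAbs ≤ 2 := le_trans (Nat.le_add_left _ _) hd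
    rw [abs_le]; omega
  have heq : q.2 + (∑ c ∈ C.erase p, c.2) - (p.2 + ∑ c ∈ C.erase p, c.2)
      = q.2 - p.2 := by ring
  rw [heq]; exact habs

/-- reconfiguring the vertical 1×n strip into the horizontal
n×1 strip (same bottom-left cell) requires at least n(n-1)/8 moves. -/
theorem strip_reconfiguration_lower_bound (n : ℕ) (k : ℕ)
    (f : ℕ → Finset (ℤ × ℤ))
    (h0 : f 0 = (Finset.range n).image (fun i : ℕ => ((0 : ℤ), (i : ℤ))))
    (hk : f k = (Finset.range n).image (fun i : ℕ => ((i : ℤ), (0 : ℤ))))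
    (hstep : ∀ i < k, isMove (f i) (f (i + 1))) :
    n * (n - 1) / 8 ≤ k := by
  have key : ∀ i ≤ k, |(∑ c ∈ f i, c.2) - (∑ c ∈ f 0, c.2)| ≤ 2 * i := by
    intro i hi
    induction i with
    | zero => simp
    | succ m ih =>
      have hm : m ≤ k := Nat.le_of_succ_le hi
      have h1 := ih hm
      have h2 := move_sum_diff (hstep m (Nat.lt_of_succ_le hi))
      push_cast
      calc |(∑ c ∈ f (m+1), c.2) - (∑ c ∈ f 0, c.2)|
          ≤ |(∑ c ∈ f (m+1), c.2) - (∑ c ∈ f m, c.2)|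
            + |(∑ c ∈ f m, c.2) - (∑ c ∈ f 0, c.2)| := abs_sub_le _ _ _
        _ ≤ 2 + 2 * m := add_le_add h2 h1
        _ = 2 * (m + 1) := by ring
  have hS0 : (∑ c ∈ f 0, c.2) = ((∑ i ∈ Finset.range n, i : ℕ) : ℤ) := by
    rw [h0, Finset.sum_image ?_]
    · push_cast; rfl
    · intro a _ b _ hab
      simpa using hab
  have hSk : (∑ c ∈ f k, c.2) = 0 := by
    rw [hk, Finset.sum_image ?_]
    · simp
    · intro a _ b _ hab
      simpa using hab
  have hgauss : (∑ i ∈ Finset.range n, i) * 2 = n * (n - 1) :=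
    Finset.sum_range_id_mul_two n
  have := key k le_rfl
  rw [hSk, hS0] at this
  have hN : (∑ i ∈ Finset.range n, i) ≤ 2 * k := by
    obtain ⟨h1, h2⟩ := abs_le.mp this
    omega
  omega
end

section
/- A single module performing monkey moves (repeated 90° rotations about any of its own incident lattice vertices that touch a static module) starting facet-adjacent to a static facet-connected configuration C becomes facet-adjacent to a module of C again after at most two consecutive rotations. Formally: if a ∉ C is facet-adjacent to s₁ ∈ C, and a rotates 90° about a shared vertex v of a and s₁ to a cell a' that is not facet-adjacent to any cell of C, then a' still shares a vertex with s₁, and every further 90° rotation of a' about a vertex shared with a cell of C lands on a cell facet-adjacent to some cell of C. -/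
/-- The four lattice vertices of the unit-square cell `c`. -/
def cellVertices (c : ℤ × ℤ) : Set (ℤ × ℤ) :=
  {c, c + (1, 0), c + (0, 1), c + (1, 1)}

/-- The cell obtained by rotating cell `c` by 90° counterclockwise about the
lattice vertex `v`. -/
def rotCCW (v c : ℤ × ℤ) : ℤ × ℤ := (v.1 + v.2 - c.2 - 1, v.2 - v.1 + c.1)

/-- The cell obtained by rotating cell `c` by 90° clockwise about the
lattice vertex `v`. -/
def rotCW (v c : ℤ × ℤ) : ℤ × ℤ := (v.1 - v.2 + c.2, v.1 + v.2 - c.1 - 1)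

/-- Two cells share a lattice vertex. -/
def sharesVertex (a b : ℤ × ℤ) : Prop :=
  ∃ v, v ∈ cellVertices a ∧ v ∈ cellVertices b

/-- a module performing monkey moves around a static
facet-connected configuration becomes facet-adjacent again after at most two
consecutive 90° rotations: if the first rotation about a vertex shared with
s₁ ∈ C lands on a cell not facet-adjacent to C, then that cell still shares
a vertex with s₁, and every further 90° rotation about a vertex shared with
a cell of C lands facet-adjacent to some cell of C. -/
theorem monkey_two_rotations (C : Set (ℤ × ℤ)) (hfin : C.Finite)
    (hconn : connectedIn C) (a s₁ : ℤ × ℤ) (ha : a ∉ C) (hs₁ : s₁ ∈ C)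
    (hadj : adjCell a s₁) (v : ℤ × ℤ)
    (hv : v ∈ cellVertices a ∧ v ∈ cellVertices s₁)
    (a' : ℤ × ℤ) (hrot : a' = rotCCW v a ∨ a' = rotCW v a)
    (ha' : a' ∉ C) (hfar : ∀ t ∈ C, ¬ adjCell a' t) :
    sharesVertex a' s₁ ∧
      ∀ w : ℤ × ℤ, ∀ t ∈ C, w ∈ cellVertices a' → w ∈ cellVertices t →
        ∀ a'' : ℤ × ℤ, (a'' = rotCCW w a' ∨ a'' = rotCW w a') →
          ∃ u ∈ C, adjCell a'' u := by
  constructor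
  · -- a' is incident to v, which is also a vertex of s₁
    refine ⟨v, ?_, hv.2⟩
    obtain ⟨hva, _⟩ := hv
    simp only [cellVertices, Set.mem_insert_iff, Set.mem_singleton_iff,
      Prod.ext_iff, Prod.fst_add, Prod.snd_add] at hva ⊢
    rcases hrot with h | h <;> subst h <;> simp only [rotCCW, rotCW] <;> omega
  · intro w t ht hwa' hwt a'' hrot2
    have hnadj : ¬ adjCell a' t := hfar t ht
    refine ⟨t, ht, ?_⟩
    simp only [cellVertices, Set.mem_insert_iff, Set.mem_singleton_iff,
      Prod.ext_iff, Prod.fst_add, Prod.snd_add] at hwa' hwt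
    simp only [adjCell] at hnadj ⊢
    rcases hrot2 with h | h <;> subst h <;> simp only [rotCCW, rotCW] <;> omega
end

section
/- In the bridging case d = 2 with g and b in the 'straight' position (g and b on the same line with exactly one empty cell between them, say g = (0,0), b = (2,0), (1,0) empty), the assumptions that C has no outer-free modules force (in the no-outer-free sense used in the paper, supplied here as local emptiness/occupancy hypotheses) that g+(0,1) ∈ C or b+(0,1) ∈ C for the appropriate orientation; consequently, adding the single cell a₁ = (1,0) to C yields a facet-connected configuration C ∪ {a₁} in which m is no longer a cut vertex, and max_{c ∈ C ∪ {a₁}} Φ(c) = Φ(m). -/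
/-- Strict lexicographic order on ℤ × ℤ. -/
def lexLt (a b : ℤ × ℤ) : Prop := a.1 < b.1 ∨ (a.1 = b.1 ∧ a.2 < b.2)

/-- Reachability inside a set of cells via facet-adjacency. -/
def reachIn (S : Set (ℤ × ℤ)) (p q : ℤ × ℤ) : Prop :=
  Relation.ReflTransGen (fun a b => a ∈ S ∧ b ∈ S ∧ adjCell a b) p q

/-! Every cell of `C ∖ {m}` is joined to `m` by a path in `C`; cutting that path just before
its first visit to `m` joins the cell, avoiding `m`, to a neighbour of `m`. As `m` maximises `Φ`,
that neighbour is `m + (-1, 0)` or `m + (0, -1)`, so `C ∖ {m}` has at most the two components of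
these cells. The new cell `g + (1, 0)` touches `g` and `b`, which lie in those two components,
and so merges them. -/

lemma adjCell_symm_s14 {p q : ℤ × ℤ} (h : adjCell p q) : adjCell q p := by
  unfold adjCell at *; omega

lemma lexLe_of_lexLt {a b : ℤ × ℤ} (h : lexLt a b) : lexLe a b := by
  unfold lexLt lexLe at *; omega

lemma lexLt_irrefl (a : ℤ × ℤ) : ¬ lexLt a a := by
  unfold lexLt; omega

lemma eq_left_or_below_of_adjCell_of_lexLe {n m : ℤ × ℤ} (hadj : adjCell n m)
    (hle : lexLe (Phi n) (Phi m)) : n = m + (-1, 0) ∨ n = m + (0, -1) := by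
  unfold adjCell at hadj
  unfold lexLe Phi at hle
  simp only [Prod.ext_iff, Prod.fst_add, Prod.snd_add] at *
  omega

section Reach

variable {S T : Set (ℤ × ℤ)}

lemma reachIn_symm {p q : ℤ × ℤ} (h : reachIn S p q) : reachIn S q p := by
  refine (@Relation.ReflTransGen.stdSymm _ _ ⟨?_⟩).symm _ _ h
  rintro a b ⟨ha, hb, hab⟩
  exact ⟨hb, ha, adjCell_symm_s14 hab⟩

lemma reachIn_mono (hST : S ⊆ T) {p q : ℤ × ℤ} (h : reachIn S p q) : reachIn T p q :=
  Relation.ReflTransGen.mono (fun _ _ ⟨ha, hb, hab⟩ => ⟨hST ha, hST hb, hab⟩) _ _ h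

lemma reachIn_of_adjCell {p q : ℤ × ℤ} (hp : p ∈ S) (hq : q ∈ S) (h : adjCell p q) :
    reachIn S p q :=
  Relation.ReflTransGen.single ⟨hp, hq, h⟩

lemma connectedIn_of_forall_reachIn {r : ℤ × ℤ} (h : ∀ p ∈ S, reachIn S p r) :
    connectedIn S :=
  fun p hp q hq => (h p hp).trans (reachIn_symm (h q hq))

lemma connectedIn_of_forall_reachIn_or {u v : ℤ × ℤ} (hvu : reachIn S v u)
    (h : ∀ p ∈ S, reachIn S p u ∨ reachIn S p v) : connectedIn S :=
  connectedIn_of_forall_reachIn fun p hp => (h p hp).elim id (·.trans hvu)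

lemma connectedIn_union_singleton (hS : connectedIn S) {x y : ℤ × ℤ} (hy : y ∈ S)
    (hxy : adjCell x y) : connectedIn (S ∪ {x}) := by
  refine connectedIn_of_forall_reachIn (r := y) fun p hp => ?_
  rcases hp with hp | rfl
  · exact reachIn_mono Set.subset_union_left (hS p hp y hy)
  · exact reachIn_of_adjCell (Or.inr rfl) (Or.inl hy) hxy

lemma exists_adjCell_reachIn_sdiff {m p : ℤ × ℤ} (hpm : reachIn S p m) (hp : p ≠ m) :
    ∃ n ∈ S, adjCell n m ∧ reachIn (S \ {m}) p n := by
  induction hpm using Relation.ReflTransGen.head_induction_on with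
  | refl => exact absurd rfl hp
  | @head a c hac _ ih =>
    by_cases hc : c = m
    · subst hc
      exact ⟨a, hac.1, hac.2.2, Relation.ReflTransGen.refl⟩
    · obtain ⟨n, hnS, hnm, hcn⟩ := ih hc
      exact ⟨n, hnS, hnm, Relation.ReflTransGen.head ⟨⟨hac.1, hp⟩, ⟨hac.2.1, hc⟩, hac.2.2⟩ hcn⟩

end Reach

lemma reachIn_sdiff_left_or_below {C : Set (ℤ × ℤ)} (hconn : connectedIn C) {m : ℤ × ℤ}
    (hm : m ∈ C) (hmax : ∀ c ∈ C, lexLe (Phi c) (Phi m)) {p : ℤ × ℤ} (hp : p ∈ C \ {m}) :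
    reachIn (C \ {m}) p (m + (-1, 0)) ∨ reachIn (C \ {m}) p (m + (0, -1)) := by
  obtain ⟨n, hnC, hnm, hpn⟩ := exists_adjCell_reachIn_sdiff (hconn p hp.1 m hm) hp.2
  rcases eq_left_or_below_of_adjCell_of_lexLe hnm (hmax n hnC) with rfl | rfl
  · exact Or.inl hpn
  · exact Or.inr hpn

theorem bridging_straight_d2_general (C : Set (ℤ × ℤ))
    (hconn : connectedIn C) (m : ℤ × ℤ) (hm : m ∈ C)
    (hmax : ∀ c ∈ C, lexLe (Phi c) (Phi m))
    (g b : ℤ × ℤ)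
    (hgG : g ∈ C \ {m} ∧ reachIn (C \ {m}) (m + (0, -1)) g)
    (hbB : b ∈ C \ {m} ∧ reachIn (C \ {m}) (m + (-1, 0)) b)
    (hgb : b = g + (2, 0))
    (hΦa : lexLt (Phi (g + (1, 0))) (Phi m)) :
    connectedIn (C ∪ {g + (1, 0)}) ∧
      (∀ c ∈ C ∪ {g + (1, 0)}, lexLe (Phi c) (Phi m)) ∧
      connectedIn ((C ∪ {g + (1, 0)}) \ {m}) := by
  set a := g + (1, 0)
  have hag : adjCell a g := by simp only [a, adjCell, Prod.fst_add, Prod.snd_add]; omega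
  have hab : adjCell a b := by simp only [a, hgb, adjCell, Prod.fst_add, Prod.snd_add]; omega
  have ham : a ≠ m := fun h => lexLt_irrefl _ (h ▸ hΦa)
  have hmono : C \ {m} ⊆ (C ∪ {a}) \ {m} := Set.sdiff_subset_sdiff_left Set.subset_union_left
  have haS : a ∈ (C ∪ {a}) \ {m} := ⟨Or.inr rfl, ham⟩
  have hag' := reachIn_of_adjCell haS (hmono hgG.1) hag
  have hgu := reachIn_mono hmono (reachIn_symm hgG.2)
  refine ⟨connectedIn_union_singleton hconn hgG.1.1 hag, ?_, ?_⟩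
  · rintro c (hc | rfl)
    exacts [hmax c hc, lexLe_of_lexLt hΦa]
  · refine connectedIn_of_forall_reachIn_or (u := m + (0, -1)) (v := m + (-1, 0)) ?_ ?_
    · have hba := reachIn_symm (reachIn_of_adjCell haS (hmono hbB.1) hab)
      exact (reachIn_mono hmono hbB.2).trans (hba.trans (hag'.trans hgu))
    · rintro p ⟨hp | rfl, hpm⟩
      · exact (reachIn_sdiff_left_or_below hconn hm hmax ⟨hp, hpm⟩).symm.imp
          (reachIn_mono hmono) (reachIn_mono hmono)
      · exact Or.inl (hag'.trans hgu)

/-- bridging in the straight d = 2 case: if g (green) and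
b = g+(2,0) (blue) lie in the two different components of C \ {m} and the
cell between them is empty and of potential less than Φ(m), then adding the
single musketeer cell a₁ = g+(1,0) yields a facet-connected configuration
whose maximum potential is still attained at m and in which m is no longer a
cut vertex. -/
theorem bridging_straight_d2 (C : Set (ℤ × ℤ)) (hfin : C.Finite)
    (hconn : connectedIn C) (m : ℤ × ℤ) (hm : m ∈ C)
    (hmax : ∀ c ∈ C, lexLe (Phi c) (Phi m))
    (hcut : ¬ connectedIn (C \ {m}))
    (hb₁ : m + (-1, 0) ∈ C) (hg₁ : m + (0, -1) ∈ C)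
    (g b : ℤ × ℤ)
    (hgG : g ∈ C \ {m} ∧ reachIn (C \ {m}) (m + (0, -1)) g)
    (hbB : b ∈ C \ {m} ∧ reachIn (C \ {m}) (m + (-1, 0)) b)
    (hgb : b = g + (2, 0)) (hmid : g + (1, 0) ∉ C)
    (hΦg : lexLt (Phi g) (Phi m)) (hΦb : lexLt (Phi b) (Phi m))
    (hΦa : lexLt (Phi (g + (1, 0))) (Phi m)) :
    connectedIn (C ∪ {g + (1, 0)}) ∧
      (∀ c ∈ C ∪ {g + (1, 0)}, lexLe (Phi c) (Phi m)) ∧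
      connectedIn ((C ∪ {g + (1, 0)}) \ {m}) :=
  bridging_straight_d2_general C hconn m hm hmax g b hgG hbB hgb hΦa
end
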